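/- Let w : ℝ^n → (0,∞] be lower semicontinuous and Ω ⊆ ℝ^n open. Then BV(Ω;w) is a Banach space under the norm ‖f‖_{BV(Ω;w)} = ‖f‖_{L¹(Ω;w)} + ‖Df‖_w(Ω); in particular, every Cauchy sequence in this norm converges in this norm to an element of BV(Ω;w). -/

import Mathlib

open MeasureTheory Metric ENNReal Filter
open scoped Topology RealInnerProductSpace ENNReal NNReal

noncomputable section

/-- Euclidean space `ℝ^n`. -/
abbrev Euc (n : ℕ) : Type := EuclideanSpace ℝ (Fin n)

/-- The divergence of a vector field `φ : ℝ^n → ℝ^n`, defined via `fderiv`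
(which, by Rademacher's theorem, is defined a.e. when `φ` is Lipschitz). -/
def divg {n : ℕ} (φ : Euc n → Euc n) (x : Euc n) : ℝ :=
  ∑ i, fderiv ℝ φ x (EuclideanSpace.single i 1) i

/-- `φ ∈ Lip_c(U; ℝ^n)`: compactly supported Lipschitz vector fields with support in `U`. -/
def IsLipc {n : ℕ} (U : Set (Euc n)) (φ : Euc n → Euc n) : Prop :=
  (∃ K, LipschitzWith K φ) ∧ HasCompactSupport φ ∧ tsupport φ ⊆ U

/-- The weighted variation `‖Df‖_w(U) = sup {∫_U f div φ : φ ∈ Lip_c(U;ℝ^n), |φ| ≤ w}`. -/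
def wVar {n : ℕ} (U : Set (Euc n)) (w : Euc n → ℝ≥0∞) (f : Euc n → ℝ) : ℝ≥0∞ :=
  ⨆ (φ : Euc n → Euc n) (_ : IsLipc U φ ∧ ∀ x, (‖φ x‖₊ : ℝ≥0∞) ≤ w x),
    ENNReal.ofReal (∫ x in U, f x * divg φ x)

/-- `f ∈ L¹(Ω; w)`. -/
def MemL1w {n : ℕ} (Ω : Set (Euc n)) (w : Euc n → ℝ≥0∞) (f : Euc n → ℝ) : Prop :=
  AEStronglyMeasurable f (volume.restrict Ω) ∧ (∫⁻ x in Ω, ‖f x‖₊ * w x) < ⊤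

/-- `f ∈ BV(Ω; w)`: bounded `w`-variation.  (Unweighted `BV(Ω)` is the case `w ≡ 1`.) -/
def MemBVw {n : ℕ} (Ω : Set (Euc n)) (w : Euc n → ℝ≥0∞) (f : Euc n → ℝ) : Prop :=
  MemL1w Ω w f ∧ wVar Ω w f < ⊤

/-- `V ⋐ Ω`: `V` is open and compactly contained in `Ω`. -/
def CpctIn {n : ℕ} (V Ω : Set (Euc n)) : Prop :=
  IsOpen V ∧ IsCompact (closure V) ∧ closure V ⊆ Ω

/-- `f ∈ L¹_loc(Ω; w)`. -/
def MemL1wLoc {n : ℕ} (Ω : Set (Euc n)) (w : Euc n → ℝ≥0∞) (f : Euc n → ℝ) : Prop :=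
  AEStronglyMeasurable f (volume.restrict Ω) ∧
    ∀ K : Set (Euc n), IsCompact K → K ⊆ Ω → (∫⁻ x in K, ‖f x‖₊ * w x) < ⊤

/-- `f ∈ BV_loc(Ω; w)`: locally bounded `w`-variation. -/
def MemBVwLoc {n : ℕ} (Ω : Set (Euc n)) (w : Euc n → ℝ≥0∞) (f : Euc n → ℝ) : Prop :=
  MemL1wLoc Ω w f ∧ ∀ V : Set (Euc n), CpctIn V Ω → wVar V w f < ⊤

/-- `μ` is the variation (Radon) measure `‖Df‖` of `f` on `Ω`: it is carried by `Ω`,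
finite on compact subsets of `Ω`, and `μ(V) = ‖Df‖(V)` for all open `V ⋐ Ω`. -/
def IsVarMeasure {n : ℕ} (Ω : Set (Euc n)) (f : Euc n → ℝ) (μ : Measure (Euc n)) : Prop :=
  μ Ωᶜ = 0 ∧ (∀ K : Set (Euc n), IsCompact K → K ⊆ Ω → μ K < ⊤) ∧
    ∀ V : Set (Euc n), CpctIn V Ω → μ V = wVar V (fun _ => 1) f

/-- `w` is an everywhere `A₁` weight with constant `C`:
`w` is locally integrable and `⨍_B w ≤ C · inf_B w` for every ball `B`. -/
def IsEA1 {n : ℕ} (w : Euc n → ℝ≥0∞) (C : ℝ≥0∞) : Prop :=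
  Measurable w ∧
  (∀ (x : Euc n) (r : ℝ), 0 < r → (∫⁻ y in ball x r, w y) < ⊤) ∧
  ∀ (x : Euc n) (r : ℝ), 0 < r →
    (∫⁻ y in ball x r, w y) / volume (ball x r) ≤ C * ⨅ y ∈ ball x r, w y

/-- `|a - b|` for extended nonnegative reals. -/
def eabs (a b : ℝ≥0∞) : ℝ≥0∞ := (a - b) ⊔ (b - a)

/-- `x` is a Lebesgue point of the weight `v`. -/
def IsLebPt {n : ℕ} (v : Euc n → ℝ≥0∞) (x : Euc n) : Prop :=
  Tendsto (fun r : ℝ => (∫⁻ y in ball x r, eabs (v y) (v x)) / volume (ball x r))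
    (𝓝[>] (0 : ℝ)) (𝓝 0)

/-- `f` is `v`-approximable: `‖Df‖`-a.e. point is a Lebesgue point of `v`. -/
def Approximable {n : ℕ} (Ω : Set (Euc n)) (f : Euc n → ℝ) (v : Euc n → ℝ≥0∞) : Prop :=
  ∀ μ : Measure (Euc n), IsVarMeasure Ω f μ → ∀ᵐ x ∂μ, IsLebPt v x

/-- `g` is the weak gradient of `f` on `Ω`. -/
def HasWeakGradient {n : ℕ} (Ω : Set (Euc n)) (f : Euc n → ℝ) (g : Euc n → Euc n) : Prop :=
  AEStronglyMeasurable g (volume.restrict Ω) ∧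
  ∀ φ : Euc n → Euc n, IsLipc Ω φ →
    ∫ x in Ω, f x * divg φ x = -∫ x in Ω, ⟪g x, φ x⟫

/-- `f ∈ W^{1,1}(Ω; w)`. -/
def MemW11w {n : ℕ} (Ω : Set (Euc n)) (w : Euc n → ℝ≥0∞) (f : Euc n → ℝ) : Prop :=
  MemL1w Ω w f ∧
    ∃ g : Euc n → Euc n, HasWeakGradient Ω f g ∧ (∫⁻ x in Ω, ‖g x‖₊ * w x) < ⊤

/-- First `n` coordinates of a point of `ℝ^{n+1}`. -/
def projE {n : ℕ} (z : Euc (n + 1)) : Euc n := WithLp.toLp 2 (fun i : Fin n => z i.castSucc)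

/-- Last coordinate of a point of `ℝ^{n+1}`. -/
def lastE {n : ℕ} (z : Euc (n + 1)) : ℝ := z (Fin.last n)

/-- The subgraph `A_w = {(x, y) : x ∈ A, 0 < y < w x} ⊆ ℝ^{n+1}`. -/
def subgraph {n : ℕ} (A : Set (Euc n)) (w : Euc n → ℝ≥0∞) : Set (Euc (n + 1)) :=
  {z | projE z ∈ A ∧ 0 < lastE z ∧ ENNReal.ofReal (lastE z) < w (projE z)}

/-- The uncentered Hardy–Littlewood maximal function of a measure. -/
def maxFn {N : ℕ} (μ : Measure (Euc N)) (x : Euc N) : ℝ≥0∞ :=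
  ⨆ (z : Euc N) (r : ℝ) (_ : 0 < r) (_ : x ∈ ball z r),
    μ (ball z r) / volume (ball z r)

end
section AuxLemmas

variable {n : ℕ}

lemma divg_eq_zero_of_not_mem_tsupport {φ : Euc n → Euc n} {x : Euc n}
    (hx : x ∉ tsupport φ) : divg φ x = 0 := by
  have h0 : fderiv ℝ φ x = fderiv ℝ (fun _ : Euc n => (0 : Euc n)) x := by
    apply Filter.EventuallyEq.fderiv_eq
    filter_upwards [(isClosed_tsupport φ).isOpen_compl.mem_nhds hx] with y hy
    exact image_eq_zero_of_notMem_tsupport hy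
  simp [divg, h0]

lemma abs_divg_le {φ : Euc n → Euc n} {K : ℝ≥0} (hφ : LipschitzWith K φ) (x : Euc n) :
    |divg φ x| ≤ (n : ℝ) * K := by
  have key : ∀ i : Fin n, |(fderiv ℝ φ x (EuclideanSpace.single i 1)) i| ≤ (K : ℝ) := by
    intro i
    have h1 : (fderiv ℝ φ x (EuclideanSpace.single i 1)) i
        = ⟪EuclideanSpace.single i (1 : ℝ), fderiv ℝ φ x (EuclideanSpace.single i 1)⟫ := by
      rw [EuclideanSpace.inner_single_left]; simp
    rw [h1]
    calc |⟪EuclideanSpace.single i (1 : ℝ), fderiv ℝ φ x (EuclideanSpace.single i 1)⟫|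
        ≤ ‖EuclideanSpace.single i (1 : ℝ)‖ * ‖fderiv ℝ φ x (EuclideanSpace.single i 1)‖ :=
          abs_real_inner_le_norm _ _
      _ ≤ ‖EuclideanSpace.single i (1 : ℝ)‖ * (‖fderiv ℝ φ x‖ * ‖EuclideanSpace.single i (1 : ℝ)‖) := by
          gcongr
          exact (fderiv ℝ φ x).le_opNorm _
      _ = ‖fderiv ℝ φ x‖ := by
          rw [EuclideanSpace.norm_single, norm_one]; ring
      _ ≤ (K : ℝ) := norm_fderiv_le_of_lipschitz ℝ hφ
  calc |divg φ x| ≤ ∑ i, |(fderiv ℝ φ x (EuclideanSpace.single i 1)) i| :=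
        Finset.abs_sum_le_sum_abs _ _
    _ ≤ ∑ _i : Fin n, (K : ℝ) := Finset.sum_le_sum fun i _ => key i
    _ = (n : ℝ) * K := by simp [Finset.sum_const, nsmul_eq_mul]

lemma measurable_divg (φ : Euc n → Euc n) : Measurable (divg φ) := by
  unfold divg
  refine Finset.measurable_sum _ fun i _ => ?_
  exact ((EuclideanSpace.proj (𝕜 := ℝ) i).continuous.measurable).comp
    (measurable_fderiv_apply_const ℝ φ (EuclideanSpace.single i 1))

lemma lsc_pos_lower_bound {w : Euc n → ℝ≥0∞} (hw0 : ∀ x, 0 < w x)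
    (hlsc : LowerSemicontinuous w) {S : Set (Euc n)} (hS : IsCompact S) :
    ∃ c : ℝ≥0∞, 0 < c ∧ c ≠ ⊤ ∧ ∀ x ∈ S, c ≤ w x := by
  classical
  set U : ℕ → Set (Euc n) := fun m => w ⁻¹' Set.Ioi (((m : ℝ≥0∞) + 1)⁻¹) with hU
  have hUopen : ∀ m, IsOpen (U m) := fun m => hlsc.isOpen_preimage _
  have hmono : ∀ {a b : ℕ}, a ≤ b → U a ⊆ U b := by
    intro a b hab x hx
    refine lt_of_le_of_lt (ENNReal.inv_le_inv' ?_) hx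
    exact add_le_add_left (by exact_mod_cast hab) 1
  have hcover : S ⊆ ⋃ m, U m := by
    intro x _
    obtain ⟨m, hm⟩ := ENNReal.exists_inv_nat_lt (hw0 x).ne'
    refine Set.mem_iUnion.2 ⟨m, ?_⟩
    exact lt_of_le_of_lt (ENNReal.inv_le_inv' le_self_add) hm
  obtain ⟨t, ht⟩ := hS.elim_finite_subcover U hUopen hcover
  set M := t.sup id with hM
  refine ⟨((M : ℝ≥0∞) + 1)⁻¹, ENNReal.inv_pos.2 (by simp), ?_, ?_⟩
  · rw [Ne, ENNReal.inv_eq_top]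
    exact (zero_lt_one.trans_le le_add_self).ne'
  · intro x hx
    obtain ⟨m, hmt, hxm⟩ := Set.mem_iUnion₂.1 (ht hx)
    have : x ∈ U M := hmono (Finset.le_sup (f := id) hmt) hxm
    exact le_of_lt this

lemma exists_divg_bound {Ω : Set (Euc n)} {w : Euc n → ℝ≥0∞}
    (hw0 : ∀ x, 0 < w x) (hlsc : LowerSemicontinuous w) {φ : Euc n → Euc n}
    (hφ : IsLipc Ω φ) :
    ∃ C : ℝ≥0∞, C ≠ ⊤ ∧ ∀ g : Euc n → ℝ,
      (∫⁻ x in Ω, ‖g x * divg φ x‖₊) ≤ C * ∫⁻ x in Ω, ‖g x‖₊ * w x := by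
  obtain ⟨K, hK⟩ := hφ.1
  obtain ⟨c, hc0, hcT, hcle⟩ := lsc_pos_lower_bound hw0 hlsc hφ.2.1
  set D : ℝ≥0∞ := ENNReal.ofReal ((n : ℝ) * K) with hD
  have hDT : D ≠ ⊤ := ENNReal.ofReal_ne_top
  have hCT : D / c ≠ ⊤ := (ENNReal.div_lt_top hDT hc0.ne').ne
  refine ⟨D / c, hCT, fun g => ?_⟩
  have hDc : D / c * c = D := ENNReal.div_mul_cancel hc0.ne' hcT
  have hpt : ∀ x, (‖g x * divg φ x‖₊ : ℝ≥0∞) ≤ D / c * ((‖g x‖₊ : ℝ≥0∞) * w x) := by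
    intro x
    by_cases hx : x ∈ tsupport φ
    · have h1 : (‖divg φ x‖₊ : ℝ≥0∞) ≤ D := by
        rw [← enorm_eq_nnnorm, Real.enorm_eq_ofReal_abs]
        exact ENNReal.ofReal_le_ofReal (abs_divg_le hK x)
      have h2 : (‖g x * divg φ x‖₊ : ℝ≥0∞) = (‖g x‖₊ : ℝ≥0∞) * ‖divg φ x‖₊ := by
        rw [nnnorm_mul, ENNReal.coe_mul]
      rw [h2]
      have h4 : (‖g x‖₊ : ℝ≥0∞) * D = D / c * ((‖g x‖₊ : ℝ≥0∞) * c) := by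
        conv_lhs => rw [← hDc]
        ring
      calc (‖g x‖₊ : ℝ≥0∞) * ‖divg φ x‖₊ ≤ (‖g x‖₊ : ℝ≥0∞) * D := by gcongr
        _ = D / c * ((‖g x‖₊ : ℝ≥0∞) * c) := h4
        _ ≤ D / c * ((‖g x‖₊ : ℝ≥0∞) * w x) := by gcongr; exact hcle x hx
    · simp [divg_eq_zero_of_not_mem_tsupport hx]
  calc (∫⁻ x in Ω, ‖g x * divg φ x‖₊)
      ≤ ∫⁻ x in Ω, D / c * ((‖g x‖₊ : ℝ≥0∞) * w x) := lintegral_mono hpt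
    _ = D / c * ∫⁻ x in Ω, (‖g x‖₊ : ℝ≥0∞) * w x := lintegral_const_mul' _ _ hCT

lemma integrable_mul_divg {Ω : Set (Euc n)} {w : Euc n → ℝ≥0∞}
    (hw0 : ∀ x, 0 < w x) (hlsc : LowerSemicontinuous w) {φ : Euc n → Euc n}
    (hφ : IsLipc Ω φ) {g : Euc n → ℝ}
    (hg : AEStronglyMeasurable g (volume.restrict Ω))
    (hgi : (∫⁻ x in Ω, ‖g x‖₊ * w x) < ⊤) :
    Integrable (fun x => g x * divg φ x) (volume.restrict Ω) := by
  obtain ⟨C, hCT, hC⟩ := exists_divg_bound hw0 hlsc hφ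
  refine ⟨hg.mul (measurable_divg φ).aestronglyMeasurable, ?_⟩
  rw [hasFiniteIntegral_def]
  exact lt_of_le_of_lt (hC g) (ENNReal.mul_lt_top hCT.lt_top hgi)

end AuxLemmas
section AuxLemmas2

variable {n : ℕ}

lemma divg_neg (φ : Euc n → Euc n) (x : Euc n) :
    divg (fun y => -φ y) x = -divg φ x := by
  unfold divg
  rw [← Finset.sum_neg_distrib]
  refine Finset.sum_congr rfl fun i _ => ?_
  have : fderiv ℝ (fun y => -φ y) x = -fderiv ℝ φ x := fderiv_neg
  rw [this]
  simp

lemma isLipc_neg {Ω : Set (Euc n)} {φ : Euc n → Euc n} (h : IsLipc Ω φ) :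
    IsLipc Ω (fun y => -φ y) := by
  obtain ⟨⟨K, hK⟩, hcs, hsupp⟩ := h
  have hts : tsupport (fun y => -φ y) = tsupport φ := by
    unfold tsupport
    rw [Function.support_fun_neg]
  refine ⟨⟨K, ?_⟩, ?_, ?_⟩
  · exact hK.neg
  · unfold HasCompactSupport
    rw [hts]; exact hcs
  · rw [hts]; exact hsupp

lemma wVar_neg (Ω : Set (Euc n)) (w : Euc n → ℝ≥0∞) (g : Euc n → ℝ) :
    wVar Ω w (fun x => -g x) = wVar Ω w g := by
  have key : ∀ h : Euc n → ℝ, wVar Ω w (fun x => -h x) ≤ wVar Ω w h := by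
    intro h
    unfold wVar
    refine iSup₂_le fun φ hφ => ?_
    have heq : (∫ x in Ω, (fun x => -h x) x * divg φ x)
        = ∫ x in Ω, h x * divg (fun y => -φ y) x := by
      refine integral_congr_ae (Filter.Eventually.of_forall fun x => ?_)
      simp only [divg_neg]; ring
    rw [heq]
    refine le_iSup₂ (f := fun (φ' : Euc n → Euc n)
      (_ : IsLipc Ω φ' ∧ ∀ x, (‖φ' x‖₊ : ℝ≥0∞) ≤ w x) =>
      ENNReal.ofReal (∫ x in Ω, h x * divg φ' x)) (fun y => -φ y)
      ⟨isLipc_neg hφ.1, fun x => by simpa using hφ.2 x⟩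
  refine le_antisymm (key g) ?_
  have h2 := key (fun x => -g x)
  simpa [neg_neg] using h2

lemma wVar_add_le {Ω : Set (Euc n)} {w : Euc n → ℝ≥0∞}
    (hw0 : ∀ x, 0 < w x) (hlsc : LowerSemicontinuous w) {a b : Euc n → ℝ}
    (ha : AEStronglyMeasurable a (volume.restrict Ω))
    (hai : (∫⁻ x in Ω, ‖a x‖₊ * w x) < ⊤)
    (hb : AEStronglyMeasurable b (volume.restrict Ω))
    (hbi : (∫⁻ x in Ω, ‖b x‖₊ * w x) < ⊤) :
    wVar Ω w (fun x => a x + b x) ≤ wVar Ω w a + wVar Ω w b := by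
  unfold wVar
  refine iSup₂_le fun φ hφ => ?_
  have hA := integrable_mul_divg hw0 hlsc hφ.1 ha hai
  have hB := integrable_mul_divg hw0 hlsc hφ.1 hb hbi
  have heq : (∫ x in Ω, (a x + b x) * divg φ x)
      = (∫ x in Ω, a x * divg φ x) + ∫ x in Ω, b x * divg φ x := by
    rw [← integral_add hA hB]
    exact integral_congr_ae (Filter.Eventually.of_forall fun x => by ring)
  rw [heq]
  refine ENNReal.ofReal_add_le.trans (add_le_add ?_ ?_) <;>
    exact le_iSup₂ (f := fun (φ' : Euc n → Euc n)
      (_ : IsLipc Ω φ' ∧ ∀ x, (‖φ' x‖₊ : ℝ≥0∞) ≤ w x) =>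
      ENNReal.ofReal (∫ x in Ω, _ * divg φ' x)) φ hφ

lemma wVar_le_liminf {Ω : Set (Euc n)} {w : Euc n → ℝ≥0∞}
    (hw0 : ∀ x, 0 < w x) (hlsc : LowerSemicontinuous w)
    {g : Euc n → ℝ} {gs : ℕ → Euc n → ℝ}
    (hg : AEStronglyMeasurable g (volume.restrict Ω))
    (hgi : (∫⁻ x in Ω, ‖g x‖₊ * w x) < ⊤)
    (hgs : ∀ j, AEStronglyMeasurable (gs j) (volume.restrict Ω))
    (hconv : Filter.Tendsto (fun j => ∫⁻ x in Ω, ‖gs j x - g x‖₊ * w x)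
      Filter.atTop (nhds 0)) :
    wVar Ω w g ≤ Filter.liminf (fun j => wVar Ω w (gs j)) Filter.atTop := by
  unfold wVar
  refine iSup₂_le fun φ hφ => ?_
  obtain ⟨C, hCT, hC⟩ := exists_divg_bound hw0 hlsc hφ.1
  set L : ℝ := ∫ x in Ω, g x * divg φ x with hLdef
  have hgint : Integrable (fun x => g x * divg φ x) (volume.restrict Ω) :=
    integrable_mul_divg hw0 hlsc hφ.1 hg hgi
  have hev : ∀ᶠ j in Filter.atTop, (∫⁻ x in Ω, ‖gs j x - g x‖₊ * w x) < 1 :=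
    hconv.eventually_lt_const (by norm_num)
  have htend : Filter.Tendsto (fun j => ∫ x in Ω, gs j x * divg φ x)
      Filter.atTop (nhds L) := by
    rw [← tendsto_sub_nhds_zero_iff]
    apply squeeze_zero_norm'
      (a := fun j => (C * ∫⁻ x in Ω, ‖gs j x - g x‖₊ * w x).toReal)
    · filter_upwards [hev] with j hj
      have hdj : Integrable (fun x => (gs j x - g x) * divg φ x) (volume.restrict Ω) :=
        integrable_mul_divg hw0 hlsc hφ.1 ((hgs j).sub hg) (hj.trans_le le_top)
      have hjint : Integrable (fun x => gs j x * divg φ x) (volume.restrict Ω) := by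
        refine (hdj.add hgint).congr (Filter.Eventually.of_forall fun x => ?_)
        simp only [Pi.add_apply]
        ring
      have heq : (∫ x in Ω, gs j x * divg φ x) - L
          = ∫ x in Ω, (gs j x - g x) * divg φ x := by
        rw [hLdef, ← integral_sub hjint hgint]
        exact integral_congr_ae (Filter.Eventually.of_forall fun x => by ring)
      rw [heq]
      calc ‖∫ x in Ω, (gs j x - g x) * divg φ x‖
          ≤ (∫⁻ x in Ω, ‖(gs j x - g x) * divg φ x‖₊).toReal := by
            refine (norm_integral_le_lintegral_norm _).trans_eq ?_
            congr 1
            exact lintegral_congr fun x => ofReal_norm _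
        _ ≤ (C * ∫⁻ x in Ω, ‖gs j x - g x‖₊ * w x).toReal := by
            refine ENNReal.toReal_mono ?_ (hC _)
            exact (ENNReal.mul_lt_top hCT.lt_top (hj.trans_le le_top)).ne
    · have h1 : Filter.Tendsto (fun j => C * ∫⁻ x in Ω, ‖gs j x - g x‖₊ * w x)
          Filter.atTop (nhds 0) := by
        have h2 := ENNReal.Tendsto.const_mul (a := C) hconv (Or.inr hCT)
        simpa using h2
      have h3 := (ENNReal.tendsto_toReal (a := 0) (by simp)).comp h1
      simpa [Function.comp_def] using h3
  have hof : Filter.Tendsto (fun j => ENNReal.ofReal (∫ x in Ω, gs j x * divg φ x))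
      Filter.atTop (nhds (ENNReal.ofReal L)) := ENNReal.tendsto_ofReal htend
  rw [← hof.liminf_eq]
  refine Filter.liminf_le_liminf (Filter.Eventually.of_forall fun j => ?_)
  exact le_iSup₂ (f := fun (φ' : Euc n → Euc n)
    (_ : IsLipc Ω φ' ∧ ∀ x, (‖φ' x‖₊ : ℝ≥0∞) ≤ w x) =>
    ENNReal.ofReal (∫ x in Ω, gs j x * divg φ' x)) φ hφ

end AuxLemmas2
/-- `BV(Ω;w)` is complete under the norm
`‖f‖ = ‖f‖_{L¹(Ω;w)} + ‖Df‖_w(Ω)`: every Cauchy sequence converges in this norm to an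
element of `BV(Ω;w)`. -/
theorem stmt_10 {n : ℕ} (Ω : Set (Euc n)) (hΩ : IsOpen Ω)
    (w : Euc n → ℝ≥0∞) (hw0 : ∀ x, 0 < w x) (hlsc : LowerSemicontinuous w)
    (F : ℕ → Euc n → ℝ) (hF : ∀ k, MemBVw Ω w (F k))
    (hcauchy : ∀ ε : ℝ≥0∞, 0 < ε → ∃ N : ℕ, ∀ j k : ℕ, N ≤ j → N ≤ k →
      (∫⁻ x in Ω, ‖F j x - F k x‖₊ * w x) +
        wVar Ω w (fun x => F j x - F k x) < ε) :
    ∃ f : Euc n → ℝ, MemBVw Ω w f ∧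
      Tendsto (fun k => (∫⁻ x in Ω, ‖F k x - f x‖₊ * w x) +
        wVar Ω w (fun x => F k x - f x)) atTop (𝓝 0) := by
  classical
  have hwm : Measurable w := hlsc.measurable
  set ν : Measure (Euc n) := (volume.restrict Ω).withDensity w with hν
  have hac : ν ≪ volume.restrict Ω := withDensity_absolutelyContinuous _ _
  have hac' : volume.restrict Ω ≪ ν :=
    withDensity_absolutelyContinuous' hwm.aemeasurable
      (Filter.Eventually.of_forall fun x => (hw0 x).ne')
  have hFm : ∀ k, AEStronglyMeasurable (F k) (volume.restrict Ω) := fun k => (hF k).1.1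
  have hFi : ∀ k, (∫⁻ x in Ω, ‖F k x‖₊ * w x) < ⊤ := fun k => (hF k).1.2
  have hlint : ∀ g : Euc n → ℝ, AEStronglyMeasurable g (volume.restrict Ω) →
      (∫⁻ x in Ω, ‖g x‖₊ * w x) = eLpNorm g 1 ν := by
    intro g hg
    rw [eLpNorm_one_eq_lintegral_enorm, hν,
      lintegral_withDensity_eq_lintegral_mul₀ hwm.aemeasurable hg.enorm]
    exact lintegral_congr fun x => (mul_comm _ _)
  haveI : Fact ((1 : ℝ≥0∞) ≤ 1) := ⟨le_rfl⟩
  have hmem : ∀ k, MemLp (F k) 1 ν := by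
    intro k
    refine ⟨(hFm k).mono_ac hac, ?_⟩
    rw [← hlint _ (hFm k)]
    exact hFi k
  set G : ℕ → Lp ℝ 1 ν := fun k => (hmem k).toLp (F k) with hG
  have hGdist : ∀ j k, dist (G j) (G k)
      = (∫⁻ x in Ω, ‖F j x - F k x‖₊ * w x).toReal := by
    intro j k
    rw [Lp.dist_def, hlint (fun x => F j x - F k x) ((hFm j).sub (hFm k))]
    congr 1
    apply eLpNorm_congr_ae
    filter_upwards [(hmem j).coeFn_toLp, (hmem k).coeFn_toLp] with x hx hx'
    simp [hG, hx, hx']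
  have hcs : CauchySeq G := by
    rw [Metric.cauchySeq_iff]
    intro ε hε
    obtain ⟨N, hN⟩ := hcauchy (ENNReal.ofReal ε) (by simpa using hε)
    refine ⟨N, fun j hj k hk => ?_⟩
    rw [hGdist]
    have h1 : (∫⁻ x in Ω, ‖F j x - F k x‖₊ * w x) < ENNReal.ofReal ε :=
      lt_of_le_of_lt le_self_add (hN j k hj hk)
    exact ENNReal.toReal_lt_of_lt_ofReal h1
  obtain ⟨Lf, hLf⟩ := cauchySeq_tendsto_of_complete hcs
  set f : Euc n → ℝ := ⇑Lf with hfdef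
  have hfmeas_ν : AEStronglyMeasurable f ν := Lp.aestronglyMeasurable Lf
  have hfmeas : AEStronglyMeasurable f (volume.restrict Ω) := hfmeas_ν.mono_ac hac'
  have hfi : (∫⁻ x in Ω, ‖f x‖₊ * w x) < ⊤ := by
    rw [hlint f hfmeas]
    exact Lp.eLpNorm_lt_top Lf
  -- convergence in L¹(w)
  have hconvA : Tendsto (fun j => ∫⁻ x in Ω, ‖F j x - f x‖₊ * w x) atTop (𝓝 0) := by
    have hd : Tendsto (fun k => dist (G k) Lf) atTop (𝓝 0) :=
      tendsto_iff_dist_tendsto_zero.1 hLf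
    have heq : ∀ k, (∫⁻ x in Ω, ‖F k x - f x‖₊ * w x)
        = ENNReal.ofReal (dist (G k) Lf) := by
      intro k
      rw [Lp.dist_def, ENNReal.ofReal_toReal,
        hlint (fun x => F k x - f x) ((hFm k).sub hfmeas)]
      · apply eLpNorm_congr_ae
        filter_upwards [(hmem k).coeFn_toLp] with x hx
        simp [hG, hfdef, hx]
      · have h5 : (⇑(G k) - ⇑Lf : Euc n → ℝ) =ᵐ[ν] ⇑(G k - Lf) := (Lp.coeFn_sub _ _).symm
        rw [eLpNorm_congr_ae h5]
        exact Lp.eLpNorm_ne_top _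
    have h6 := ENNReal.tendsto_ofReal hd
    simp only [ENNReal.ofReal_zero] at h6
    simpa only [heq] using h6
  -- finiteness of weighted L¹ norms of differences
  have hdiffL1 : ∀ g h : Euc n → ℝ, AEStronglyMeasurable g (volume.restrict Ω) →
      AEStronglyMeasurable h (volume.restrict Ω) →
      (∫⁻ x in Ω, ‖g x‖₊ * w x) < ⊤ → (∫⁻ x in Ω, ‖h x‖₊ * w x) < ⊤ →
      (∫⁻ x in Ω, ‖g x - h x‖₊ * w x) < ⊤ := by
    intro g h hg hh hgf hhf
    rw [hlint (fun x => g x - h x) (hg.sub hh)]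
    have h7 : eLpNorm (g - h) 1 ν ≤ eLpNorm g 1 ν + eLpNorm h 1 ν :=
      eLpNorm_sub_le (hg.mono_ac hac) (hh.mono_ac hac) le_rfl
    refine lt_of_le_of_lt h7 (ENNReal.add_lt_top.2 ⟨?_, ?_⟩)
    · rwa [← hlint g hg]
    · rwa [← hlint h hh]
  -- lower semicontinuity of the variation along the sequence
  have hBk : ∀ k : ℕ, wVar Ω w (fun x => F k x - f x)
      ≤ Filter.liminf (fun j => wVar Ω w (fun x => F k x - F j x)) atTop := by
    intro k
    refine wVar_le_liminf hw0 hlsc ((hFm k).sub hfmeas)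
      (hdiffL1 _ _ (hFm k) hfmeas (hFi k) hfi)
      (fun j => (hFm k).sub (hFm j)) ?_
    have heq : ∀ j, (∫⁻ x in Ω, ‖(F k x - F j x) - (F k x - f x)‖₊ * w x)
        = ∫⁻ x in Ω, ‖F j x - f x‖₊ * w x := by
      intro j
      refine lintegral_congr fun x => ?_
      rw [show (F k x - F j x) - (F k x - f x) = -(F j x - f x) by ring, nnnorm_neg]
    simpa only [heq] using hconvA
  have hswap : ∀ j k : ℕ, wVar Ω w (fun x => F k x - F j x)
      = wVar Ω w (fun x => F j x - F k x) := by
    intro j k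
    rw [show (fun x => F k x - F j x) = (fun x => -(F j x - F k x)) from funext fun x => by ring,
      wVar_neg]
  -- the eventual bound on the liminf
  have hliminf_le : ∀ (k N : ℕ) (ε : ℝ≥0∞), (∀ j, N ≤ j →
      wVar Ω w (fun x => F k x - F j x) ≤ ε) →
      Filter.liminf (fun j => wVar Ω w (fun x => F k x - F j x)) atTop ≤ ε := by
    intro k N ε hev
    refine Filter.liminf_le_of_frequently_le' ?_
    refine Filter.Eventually.frequently ?_
    filter_upwards [Filter.eventually_ge_atTop N] with j hj
    exact hev j hj
  -- wVar f is finite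
  obtain ⟨N₁, hN₁⟩ := hcauchy 1 one_pos
  have hW0f : wVar Ω w (fun x => F 0 x - f x) < ⊤ := by
    refine lt_of_le_of_lt (hBk 0) ?_
    have hc1 : wVar Ω w (fun x => F 0 x - F N₁ x) < ⊤ := by
      have h01 := wVar_add_le hw0 hlsc (hFm 0) (hFi 0) ((hFm N₁).neg)
        (by simpa using hFi N₁)
      have h02 : wVar Ω w (fun x => F 0 x - F N₁ x)
          ≤ wVar Ω w (F 0) + wVar Ω w (fun x => -F N₁ x) := by
        rw [show (fun x => F 0 x - F N₁ x) = (fun x => F 0 x + (-F N₁) x) from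
          funext fun x => by simp [sub_eq_add_neg]]
        exact h01
      rw [wVar_neg] at h02
      exact lt_of_le_of_lt h02 (ENNReal.add_lt_top.2 ⟨(hF 0).2, (hF N₁).2⟩)
    refine lt_of_le_of_lt (hliminf_le 0 N₁ (wVar Ω w (fun x => F 0 x - F N₁ x) + 1) ?_)
      (ENNReal.add_lt_top.2 ⟨hc1, ENNReal.one_lt_top⟩)
    intro j hj
    have hstep := wVar_add_le hw0 hlsc ((hFm 0).sub (hFm N₁))
      (hdiffL1 _ _ (hFm 0) (hFm N₁) (hFi 0) (hFi N₁))
      ((hFm N₁).sub (hFm j)) (hdiffL1 _ _ (hFm N₁) (hFm j) (hFi N₁) (hFi j))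
    have hgoal : wVar Ω w (fun x => F 0 x - F j x)
        = wVar Ω w (fun x => (F 0 x - F N₁ x) + (F N₁ x - F j x)) := by
      congr 1
      funext x
      ring
    rw [hgoal]
    refine hstep.trans (add_le_add le_rfl ?_)
    exact le_of_lt (lt_of_le_of_lt le_add_self (hN₁ N₁ j le_rfl hj))
  have hvarf : wVar Ω w f < ⊤ := by
    have h1 := wVar_add_le hw0 hlsc (hfmeas.sub (hFm 0))
      (hdiffL1 f (F 0) hfmeas (hFm 0) hfi (hFi 0)) (hFm 0) (hFi 0)
    have h1' : wVar Ω w f ≤ wVar Ω w (fun x => f x - F 0 x) + wVar Ω w (F 0) := by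
      refine le_trans (le_of_eq ?_) h1
      congr 1
      funext x
      show f x = f x - F 0 x + F 0 x
      ring
    have h2 : wVar Ω w (fun x => f x - F 0 x) = wVar Ω w (fun x => F 0 x - f x) := by
      rw [show (fun x => f x - F 0 x) = (fun x => -(F 0 x - f x)) from
        funext fun x => by ring, wVar_neg]
    rw [h2] at h1'
    exact lt_of_le_of_lt h1' (ENNReal.add_lt_top.2 ⟨hW0f, (hF 0).2⟩)
  refine ⟨f, ⟨⟨hfmeas, hfi⟩, hvarf⟩, ?_⟩
  -- the convergence statement
  rw [ENNReal.tendsto_atTop_zero]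
  intro ε hε
  obtain ⟨N, hN⟩ := hcauchy (ε / 2) (ENNReal.half_pos hε.ne')
  refine ⟨N, fun k hk => ?_⟩
  have hA : (∫⁻ x in Ω, ‖F k x - f x‖₊ * w x) ≤ ε / 2 := by
    have hbound : ∀ᶠ j in atTop, (∫⁻ x in Ω, ‖F k x - f x‖₊ * w x)
        ≤ ε / 2 + ∫⁻ x in Ω, ‖F j x - f x‖₊ * w x := by
      filter_upwards [Filter.eventually_ge_atTop N] with j hj
      have htri : (∫⁻ x in Ω, ‖F k x - f x‖₊ * w x)
          ≤ (∫⁻ x in Ω, ‖F k x - F j x‖₊ * w x) + ∫⁻ x in Ω, ‖F j x - f x‖₊ * w x := by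
        rw [hlint (fun x => F k x - f x) ((hFm k).sub hfmeas),
          hlint (fun x => F k x - F j x) ((hFm k).sub (hFm j)),
          hlint (fun x => F j x - f x) ((hFm j).sub hfmeas)]
        have heq : eLpNorm (fun x => F k x - f x) 1 ν
            = eLpNorm ((fun x => F k x - F j x) + (fun x => F j x - f x)) 1 ν := by
          apply eLpNorm_congr_ae
          refine Filter.Eventually.of_forall fun x => ?_
          simp only [Pi.add_apply]
          ring
        rw [heq]
        exact eLpNorm_add_le (((hFm k).sub (hFm j)).mono_ac hac)
          (((hFm j).sub hfmeas).mono_ac hac) le_rfl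
      refine htri.trans (add_le_add ?_ le_rfl)
      exact le_of_lt (lt_of_le_of_lt le_self_add (hN k j hk hj))
    have hlim : Tendsto (fun j => ε / 2 + ∫⁻ x in Ω, ‖F j x - f x‖₊ * w x)
        atTop (𝓝 (ε / 2 + 0)) := Tendsto.const_add _ hconvA
    rw [add_zero] at hlim
    exact ge_of_tendsto hlim hbound
  have hB : wVar Ω w (fun x => F k x - f x) ≤ ε / 2 := by
    refine (hBk k).trans (hliminf_le k N (ε / 2) fun j hj => ?_)
    rw [hswap j k]
    exact le_of_lt (lt_of_le_of_lt le_add_self (hN j k hj hk))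
  calc (∫⁻ x in Ω, ‖F k x - f x‖₊ * w x) + wVar Ω w (fun x => F k x - f x)
      ≤ ε / 2 + ε / 2 := add_le_add hA hB
    _ = ε := ENNReal.add_halves ε
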